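/- Let (X, d) be an infinite compact metric space. Then the functional I : M(X) → ℝ is discontinuous at every point of M(X) with respect to the weak-* topology, and the bilinear functional I(·,·) : M(X) × M(X) → ℝ is discontinuous at every point of M(X) × M(X) (with the product of the weak-* topologies). -/

import Mathlib

open MeasureTheory Filter Topology

/-- `dmu μ x = ∫ d(x,y) dμ(y)`, defined via the Jordan decomposition of the
finite signed Borel measure `μ`. -/
noncomputable def dmu {X : Type*} [MetricSpace X] [MeasurableSpace X]
    (μ : SignedMeasure X) (x : X) : ℝ :=
  (∫ y, dist x y ∂μ.toJordanDecomposition.posPart) -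
  (∫ y, dist x y ∂μ.toJordanDecomposition.negPart)

/-- `Ibil μ ν = ∫∫ d(x,y) dμ(x)dν(y)`. -/
noncomputable def Ibil {X : Type*} [MetricSpace X] [MeasurableSpace X]
    (μ ν : SignedMeasure X) : ℝ :=
  (∫ x, dmu ν x ∂μ.toJordanDecomposition.posPart) -
  (∫ x, dmu ν x ∂μ.toJordanDecomposition.negPart)

/-- The energy integral `I(μ) = I(μ, μ)`. -/
noncomputable def Ien {X : Type*} [MetricSpace X] [MeasurableSpace X]
    (μ : SignedMeasure X) : ℝ := Ibil μ μ

/-- Integration of a function against a signed measure, via Jordan decomposition. -/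
noncomputable def integSM {X : Type*} [MeasurableSpace X] (μ : SignedMeasure X)
    (f : X → ℝ) : ℝ :=
  (∫ x, f x ∂μ.toJordanDecomposition.posPart) -
  (∫ x, f x ∂μ.toJordanDecomposition.negPart)

/-- The weak-* topology on the space of finite signed Borel measures on `X`,
i.e. the topology induced by the maps `μ ↦ ∫ f dμ` for `f ∈ C(X, ℝ)`. -/
noncomputable def weakStar (X : Type*) [TopologicalSpace X] [MeasurableSpace X] :
    TopologicalSpace (SignedMeasure X) :=
  TopologicalSpace.induced
    (fun μ : SignedMeasure X => fun f : C(X, ℝ) => integSM μ f) inferInstance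

/-!
A weak-* neighbourhood of `μ` only constrains finitely many integrals `∫ f dμ`, `f ∈ F`.
On an infinite compact metric space there are `n > 2 |F|` points whose distance matrix `D` is
invertible: add points `y` one at a time close to an accumulation point `z` already in the family,
so that the Schur complement `-uᵀ D⁻¹ u` of the bordered matrix is `-2 d(y, z) + O(d(y, z)²) ≠ 0`
(`u` is the column of `z` up to `O(d(y, z))`, and `D` has zero diagonal). A nondegenerate symmetric
form has no isotropic subspace of more than half the dimension, so some atomic measure
`σ = ∑ cⱼ δ_{pⱼ}` annihilates `F` while `I(σ) = cᵀ D c ≠ 0`. Then `μᵢ + tσ` stay in the given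
neighbourhoods of `μᵢ`, but `I(μ₁ + tσ, μ₂ + tσ) - I(μ₁, μ₂) = t (I(μ₁, σ) + I(σ, μ₂)) + t² I(σ)`
is unbounded in `t`.
-/

open Matrix Module

section LinearAlgebra

variable {ι : Type*} [Fintype ι]

lemma abs_dotProduct_mulVec_le (B : Matrix ι ι ℝ) {η : ι → ℝ} {r : ℝ} (hη : ∀ i, |η i| ≤ r) :
    |η ⬝ᵥ B *ᵥ η| ≤ (∑ i, ∑ j, |B i j|) * r ^ 2 := by
  simp only [dotProduct, mulVec, Finset.mul_sum, Finset.sum_mul]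
  refine (Finset.abs_sum_le_sum_abs _ _).trans (Finset.sum_le_sum fun i _ => ?_)
  refine (Finset.abs_sum_le_sum_abs _ _).trans (Finset.sum_le_sum fun j _ => ?_)
  rw [abs_mul, abs_mul, sq]
  have := mul_le_mul (hη i) (hη j) (abs_nonneg _) ((abs_nonneg _).trans (hη i))
  nlinarith [abs_nonneg (B i j)]

variable [DecidableEq ι]

lemma det_fromBlocks_replicateCol_replicateRow_zero {K : Type*} [Field K]
    (A : Matrix ι ι K) [Invertible A] (u : ι → K) :
    (fromBlocks A (replicateCol (Fin 1) u) (replicateRow (Fin 1) u) 0).det =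
      -(A.det * (u ⬝ᵥ A⁻¹ *ᵥ u)) := by
  rw [det_fromBlocks₁₁, det_unique (n := Fin 1), invOf_eq_nonsing_inv, Matrix.mul_assoc,
    ← replicateCol_mulVec, zero_sub, neg_apply, replicateRow_mul_replicateCol_apply, mul_neg]

lemma dotProduct_inv_mulVec_mulVec_single_add {K : Type*} [Field K] {A : Matrix ι ι K}
    (hA : A.IsSymm) (hdet : IsUnit A.det) (i₀ : ι) (η : ι → K) :
    (A *ᵥ Pi.single i₀ 1 + η) ⬝ᵥ A⁻¹ *ᵥ (A *ᵥ Pi.single i₀ 1 + η) =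
      A i₀ i₀ + 2 * η i₀ + η ⬝ᵥ A⁻¹ *ᵥ η := by
  have hcancel : A⁻¹ *ᵥ A *ᵥ Pi.single i₀ 1 = Pi.single i₀ 1 := by
    rw [mulVec_mulVec, nonsing_inv_mul A hdet, one_mulVec]
  have hcross : (A *ᵥ Pi.single i₀ 1) ⬝ᵥ A⁻¹ *ᵥ η = η i₀ := by
    rw [← vecMul_transpose, hA.eq, ← dotProduct_mulVec, mulVec_mulVec, mul_nonsing_inv A hdet,
      one_mulVec, single_dotProduct, one_mul]
  rw [mulVec_add, hcancel, dotProduct_add, add_dotProduct, add_dotProduct, dotProduct_single,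
    dotProduct_single, hcross, mulVec_single_one]
  simp only [col_apply, mul_one]
  ring

lemma exists_mem_dotProduct_mulVec_ne_zero {K : Type*} [Field K] [NeZero (2 : K)]
    {D : Matrix ι ι K} (hD : D.IsSymm) (hdet : D.det ≠ 0) {W : Submodule K (ι → K)}
    (hW : Fintype.card ι < 2 * finrank K W) : ∃ c ∈ W, c ⬝ᵥ D *ᵥ c ≠ 0 := by
  by_contra! hq
  set B := D.toBilin'
  have hq' : ∀ c ∈ W, B c c = 0 := fun c hc => (toBilin'_apply' D c c).trans (hq c hc)
  have hsymm : ∀ v w, B v w = B w v := fun v w => by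
    rw [toBilin'_apply', toBilin'_apply', dotProduct_mulVec, ← mulVec_transpose, hD.eq,
      dotProduct_comm]
  have hpolar : ∀ v ∈ W, ∀ w ∈ W, B v w = 0 := fun v hv w hw => by
    have h := hq' (v + w) (W.add_mem hv hw)
    simp only [map_add, LinearMap.add_apply, hq' v hv, hq' w hw, hsymm w v] at h
    have h2 : (2 : K) * B v w = 0 := by linear_combination h
    exact (mul_eq_zero.1 h2).resolve_left two_ne_zero
  have hle : W ≤ B.orthogonal W := fun v hv =>
    LinearMap.BilinForm.mem_orthogonal_iff.2 fun w hw => hpolar w hw v hv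
  have := Submodule.finrank_mono hle
  rw [LinearMap.BilinForm.finrank_orthogonal
      (LinearMap.BilinForm.nondegenerate_toBilin'_of_det_ne_zero' D hdet),
    finrank_fintype_fun_eq_card] at this
  omega

end LinearAlgebra

section DistMatrix

variable {X : Type*} [MetricSpace X] {ι : Type*}

def distMatrix (p : ι → X) : Matrix ι ι ℝ := Matrix.of fun i j => dist (p i) (p j)

lemma distMatrix_isSymm (p : ι → X) : (distMatrix p).IsSymm :=
  IsSymm.ext fun _ _ => dist_comm _ _

lemma distMatrix_sumElim (p : ι → X) (y : X) :
    distMatrix (Sum.elim p fun _ : Fin 1 => y) =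
      fromBlocks (distMatrix p) (replicateCol (Fin 1) fun i => dist (p i) y)
        (replicateRow (Fin 1) fun i => dist (p i) y) 0 := by
  ext (i | i) (j | j) <;> simp [distMatrix, dist_comm]

variable [Fintype ι] [DecidableEq ι]

lemma eventually_pos_dotProduct_inv_mulVec_dist {p : ι → X} (hp : (distMatrix p).det ≠ 0)
    (i₀ : ι) :
    ∀ᶠ y in 𝓝[≠] (p i₀), 0 < (fun i => dist (p i) y) ⬝ᵥ
      (distMatrix p)⁻¹ *ᵥ fun i => dist (p i) y := by
  set M := ∑ i, ∑ j, |(distMatrix p)⁻¹ i j|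
  have hM : 0 ≤ M := Finset.sum_nonneg fun i _ => Finset.sum_nonneg fun j _ => abs_nonneg _
  refine eventually_nhdsWithin_iff.2 (Metric.eventually_nhds_iff.2 ⟨1 / (M + 1), by positivity,
    fun y hy hne => ?_⟩)
  set ρ := dist y (p i₀)
  have hρ : 0 < ρ := dist_pos.2 hne
  have hρM : M * ρ < 1 := by
    rw [lt_div_iff₀ (by positivity)] at hy
    nlinarith
  set η : ι → ℝ := fun i => dist (p i) y - dist (p i) (p i₀)
  have hu : (fun i => dist (p i) y) = distMatrix p *ᵥ Pi.single i₀ 1 + η := by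
    ext i; simp [η, distMatrix]
  have hη : ∀ i, |η i| ≤ ρ := fun i => by
    simpa only [η, dist_comm (p i)] using abs_dist_sub_le y (p i₀) (p i)
  have hquad := abs_dotProduct_mulVec_le (distMatrix p)⁻¹ hη
  rw [hu, dotProduct_inv_mulVec_mulVec_single_add (distMatrix_isSymm p)
    (isUnit_iff_ne_zero.2 hp)]
  have hA : distMatrix p i₀ i₀ = 0 := dist_self _
  have hη₀ : η i₀ = ρ := by simp [η, ρ, dist_comm]
  rw [hA, hη₀]
  nlinarith [abs_le.1 hquad]

lemma exists_det_distMatrix_sumElim_ne_zero {p : ι → X} (hp : (distMatrix p).det ≠ 0) (i₀ : ι)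
    [(𝓝[≠] (p i₀)).NeBot] : ∃ y, (distMatrix (Sum.elim p fun _ : Fin 1 => y)).det ≠ 0 := by
  obtain ⟨y, hy⟩ := (eventually_pos_dotProduct_inv_mulVec_dist hp i₀).exists
  have : Invertible (distMatrix p) := invertibleOfIsUnitDet _ (isUnit_iff_ne_zero.2 hp)
  refine ⟨y, ?_⟩
  rw [distMatrix_sumElim, det_fromBlocks_replicateCol_replicateRow_zero, neg_ne_zero]
  exact mul_ne_zero hp hy.ne'

lemma exists_det_distMatrix_ne_zero [CompactSpace X] [Infinite X] (n : ℕ) :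
    ∃ p : Fin (n + 2) → X, (distMatrix p).det ≠ 0 := by
  obtain ⟨z, hz⟩ := exists_nhds_ne_neBot X
  suffices ∃ p : Fin (n + 2) → X, (∃ i₀, p i₀ = z) ∧ (distMatrix p).det ≠ 0 from
    this.imp fun _ => And.right
  induction n with
  | zero =>
    obtain ⟨y, hy⟩ := hz.nonempty_of_mem self_mem_nhdsWithin
    refine ⟨![z, y], ⟨0, rfl⟩, ?_⟩
    have : 0 < dist z y := dist_pos.2 (Ne.symm hy)
    rw [det_fin_two]
    simp [distMatrix, dist_comm y z, this.ne']
  | succ n ih =>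
    obtain ⟨p, ⟨i₀, rfl⟩, hp⟩ := ih
    obtain ⟨y, hy⟩ := exists_det_distMatrix_sumElim_ne_zero hp i₀
    let e : Fin (n + 1 + 2) ≃ Fin (n + 2) ⊕ Fin 1 := (finSumFinEquiv (m := n + 2) (n := 1)).symm
    refine ⟨Sum.elim p (fun _ => y) ∘ e, ⟨e.symm (Sum.inl i₀), by simp⟩, ?_⟩
    rwa [show distMatrix (Sum.elim p (fun _ => y) ∘ e) =
        (distMatrix (Sum.elim p fun _ : Fin 1 => y)).submatrix e e from rfl,
      det_submatrix_equiv_self]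

end DistMatrix

section Integration

variable {X : Type*} [MeasurableSpace X]

lemma integSM_smul (r : ℝ) (μ : SignedMeasure X) (f : X → ℝ) :
    integSM (r • μ) f = r * integSM μ f := by
  simp only [integSM, SignedMeasure.toJordanDecomposition_smul_real,
    JordanDecomposition.real_smul_def]
  split_ifs with hr
  · simp [integral_smul_nnreal_measure, NNReal.smul_def, mul_sub, hr]
  · simp [JordanDecomposition.neg_posPart, JordanDecomposition.neg_negPart,
      integral_smul_nnreal_measure, NNReal.smul_def, (not_le.1 hr).le]
    ring

lemma integSM_const_mul (μ : SignedMeasure X) (r : ℝ) (f : X → ℝ) :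
    integSM μ (fun x => r * f x) = r * integSM μ f := by
  simp only [integSM, integral_const_mul]
  ring

variable [TopologicalSpace X] [CompactSpace X] [OpensMeasurableSpace X]

lemma Continuous.integrable_of_compactSpace {f : X → ℝ} (hf : Continuous f) (ρ : Measure X)
    [IsFiniteMeasure ρ] : Integrable f ρ :=
  hf.integrable_of_hasCompactSupport (HasCompactSupport.of_compactSpace f)

lemma integSM_sub_toSignedMeasure (P N : Measure X) [IsFiniteMeasure P] [IsFiniteMeasure N]
    {f : X → ℝ} (hf : Continuous f) :
    integSM (P.toSignedMeasure - N.toSignedMeasure) f = ∫ x, f x ∂P - ∫ x, f x ∂N := by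
  set J := (P.toSignedMeasure - N.toSignedMeasure).toJordanDecomposition
  have hJ : J.posPart + N = P + J.negPart := by
    rw [← Measure.toSignedMeasure_eq_toSignedMeasure_iff, Measure.toSignedMeasure_add,
      Measure.toSignedMeasure_add, ← sub_eq_sub_iff_add_eq_add]
    exact (SignedMeasure.toSignedMeasure_toJordanDecomposition _)
  have := congrArg (fun ρ => ∫ x, f x ∂ρ) hJ
  simp only [integral_add_measure (hf.integrable_of_compactSpace _)
    (hf.integrable_of_compactSpace _)] at this
  simp only [integSM]
  linarith

lemma integSM_add (μ ν : SignedMeasure X) {f : X → ℝ} (hf : Continuous f) :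
    integSM (μ + ν) f = integSM μ f + integSM ν f := by
  have hrep : μ + ν =
      (μ.toJordanDecomposition.posPart + ν.toJordanDecomposition.posPart).toSignedMeasure -
        (μ.toJordanDecomposition.negPart + ν.toJordanDecomposition.negPart).toSignedMeasure := by
    conv_lhs => rw [← μ.toSignedMeasure_toJordanDecomposition,
      ← ν.toSignedMeasure_toJordanDecomposition]
    simp only [JordanDecomposition.toSignedMeasure, Measure.toSignedMeasure_add]
    abel
  rw [hrep, integSM_sub_toSignedMeasure _ _ hf,
    integral_add_measure (hf.integrable_of_compactSpace _) (hf.integrable_of_compactSpace _),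
    integral_add_measure (hf.integrable_of_compactSpace _) (hf.integrable_of_compactSpace _)]
  simp only [integSM]
  ring

lemma integSM_dirac (x : X) {f : X → ℝ} (hf : Continuous f) :
    integSM (Measure.dirac x).toSignedMeasure f = f x := by
  have := integSM_sub_toSignedMeasure (Measure.dirac x) 0 hf
  rwa [Measure.toSignedMeasure_zero, sub_zero, integral_dirac' _ _ hf.stronglyMeasurable,
    integral_zero_measure, sub_zero] at this

lemma integSM_fun_add (μ : SignedMeasure X) {f g : X → ℝ} (hf : Continuous f)
    (hg : Continuous g) : integSM μ (fun x => f x + g x) = integSM μ f + integSM μ g := by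
  simp only [integSM, integral_add (hf.integrable_of_compactSpace _)
    (hg.integrable_of_compactSpace _)]
  ring

lemma integSM_sum_smul_dirac {ι : Type*} [Fintype ι] (p : ι → X) (a : ι → ℝ) {f : X → ℝ}
    (hf : Continuous f) :
    integSM (∑ j, a j • (Measure.dirac (p j)).toSignedMeasure) f = ∑ j, a j * f (p j) := by
  refine (map_sum (AddMonoidHom.mk' (integSM · f) fun μ ν => integSM_add μ ν hf) _ _).trans ?_
  simp [integSM_smul, integSM_dirac _ hf]

end Integration

section Energy

variable {X : Type*} [MetricSpace X] [MeasurableSpace X]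

lemma dmu_smul (r : ℝ) (ν : SignedMeasure X) (x : X) : dmu (r • ν) x = r * dmu ν x :=
  integSM_smul r ν _

lemma Ibil_smul_left (r : ℝ) (μ ν : SignedMeasure X) : Ibil (r • μ) ν = r * Ibil μ ν :=
  integSM_smul r μ _

lemma Ibil_smul_right (r : ℝ) (μ ν : SignedMeasure X) : Ibil μ (r • ν) = r * Ibil μ ν := by
  simp only [Ibil, dmu_smul]
  exact integSM_const_mul μ r _

variable [CompactSpace X] [BorelSpace X]

lemma continuous_dmu (ν : SignedMeasure X) : Continuous (dmu ν) := by
  have h : ∀ ρ : Measure X, [IsFiniteMeasure ρ] → Continuous fun x => ∫ y, dist x y ∂ρ :=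
    fun ρ _ => by
      simpa using continuous_parametric_integral_of_continuous (μ := ρ) continuous_dist
        isClosed_univ.isCompact
  exact (h _).sub (h _)

lemma dmu_add (ν σ : SignedMeasure X) (x : X) : dmu (ν + σ) x = dmu ν x + dmu σ x :=
  integSM_add ν σ (continuous_const.dist continuous_id)

lemma Ibil_add_left (μ σ ν : SignedMeasure X) : Ibil (μ + σ) ν = Ibil μ ν + Ibil σ ν :=
  integSM_add μ σ (continuous_dmu ν)

lemma Ibil_add_right (μ ν σ : SignedMeasure X) : Ibil μ (ν + σ) = Ibil μ ν + Ibil μ σ := by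
  simp only [Ibil, dmu_add]
  exact integSM_fun_add μ (continuous_dmu ν) (continuous_dmu σ)

lemma Ibil_add_smul_add_smul (μ₁ μ₂ σ : SignedMeasure X) (t : ℝ) :
    Ibil (μ₁ + t • σ) (μ₂ + t • σ) =
      Ibil μ₁ μ₂ + t * (Ibil μ₁ σ + Ibil σ μ₂) + t ^ 2 * Ibil σ σ := by
  simp only [Ibil_add_left, Ibil_add_right, Ibil_smul_left, Ibil_smul_right]
  ring

lemma Ibil_sum_smul_dirac_self {ι : Type*} [Fintype ι] (p : ι → X) (a : ι → ℝ) :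
    Ibil (∑ j, a j • (Measure.dirac (p j)).toSignedMeasure)
      (∑ j, a j • (Measure.dirac (p j)).toSignedMeasure) = a ⬝ᵥ distMatrix p *ᵥ a := by
  set σ := ∑ j, a j • (Measure.dirac (p j)).toSignedMeasure
  have hdmu : ∀ x, dmu σ x = ∑ j, a j * dist x (p j) := fun x =>
    integSM_sum_smul_dirac p a (continuous_const.dist continuous_id)
  change integSM σ (dmu σ) = _
  rw [integSM_sum_smul_dirac p a (continuous_dmu σ)]
  simp [hdmu, dotProduct, mulVec, distMatrix, mul_comm]

end Energy

section Discontinuity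

variable {X : Type*} [MetricSpace X] [CompactSpace X] [MeasurableSpace X] [BorelSpace X]

lemma exists_integSM_eq_zero_Ibil_self_ne_zero [Infinite X] (F : Finset C(X, ℝ)) :
    ∃ σ : SignedMeasure X, (∀ f ∈ F, integSM σ f = 0) ∧ Ibil σ σ ≠ 0 := by
  classical
  obtain ⟨p, hp⟩ := exists_det_distMatrix_ne_zero (X := X) (2 * F.card)
  set E : Matrix F (Fin (2 * F.card + 2)) ℝ := Matrix.of fun f j => (f : C(X, ℝ)) (p j)
  have hker : Fintype.card (Fin (2 * F.card + 2)) <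
      2 * finrank ℝ (LinearMap.ker E.mulVecLin) := by
    have hsum := LinearMap.finrank_range_add_finrank_ker E.mulVecLin
    have hrange := Submodule.finrank_le (LinearMap.range E.mulVecLin)
    simp only [finrank_fintype_fun_eq_card, Fintype.card_coe, Fintype.card_fin] at hsum hrange ⊢
    omega
  obtain ⟨c, hc, hQ⟩ := exists_mem_dotProduct_mulVec_ne_zero (distMatrix_isSymm p) hp hker
  refine ⟨∑ j, c j • (Measure.dirac (p j)).toSignedMeasure, fun f hf => ?_, ?_⟩
  · rw [integSM_sum_smul_dirac p c f.continuous]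
    simpa [E, mulVec, dotProduct, mul_comm] using congrFun (LinearMap.mem_ker.1 hc) ⟨f, hf⟩
  · rwa [Ibil_sum_smul_dirac_self]

lemma exists_one_le_abs_mul_add_sq_mul (L : ℝ) {Q : ℝ} (hQ : Q ≠ 0) :
    ∃ t : ℝ, 1 ≤ |t * L + t ^ 2 * Q| := by
  set t := max 1 ((|L| + 1) / |Q|)
  have hQ' : 0 < |Q| := abs_pos.2 hQ
  have ht : 1 ≤ t := le_max_left _ _
  have htQ : |L| + 1 ≤ t * |Q| := (div_le_iff₀ hQ').1 (le_max_right _ _)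
  refine ⟨t, ?_⟩
  calc 1 ≤ t * (t * |Q| - |L|) := by nlinarith
    _ = |t ^ 2 * Q| - |-(t * L)| := by
      rw [abs_neg, abs_mul, abs_mul, abs_of_pos (by positivity : 0 < t ^ 2),
        abs_of_pos (by positivity : 0 < t)]
      ring
    _ ≤ |t * L + t ^ 2 * Q| := by
      rw [add_comm, ← sub_neg_eq_add]
      exact abs_sub_abs_le_abs_sub _ _

lemma exists_integSM_eq_zero_one_le_abs_Ibil_sub [Infinite X] (μ₁ μ₂ : SignedMeasure X)
    (F : Finset C(X, ℝ)) : ∃ σ : SignedMeasure X, (∀ f ∈ F, integSM σ f = 0) ∧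
      1 ≤ |Ibil (μ₁ + σ) (μ₂ + σ) - Ibil μ₁ μ₂| := by
  obtain ⟨σ, hF, hσ⟩ := exists_integSM_eq_zero_Ibil_self_ne_zero F
  obtain ⟨t, ht⟩ := exists_one_le_abs_mul_add_sq_mul (Ibil μ₁ σ + Ibil σ μ₂) hσ
  refine ⟨t • σ, fun f hf => by rw [integSM_smul, hF f hf, mul_zero], ?_⟩
  rwa [Ibil_add_smul_add_smul, add_assoc, add_sub_cancel_left]

end Discontinuity

attribute [local instance] weakStar

lemma exists_finset_of_mem_nhds_weakStar {X : Type*} [TopologicalSpace X] [MeasurableSpace X]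
    {μ : SignedMeasure X} {V : Set (SignedMeasure X)} (hV : V ∈ 𝓝 μ) :
    ∃ F : Finset C(X, ℝ), ∀ ν, (∀ f ∈ F, integSM ν f = integSM μ f) → ν ∈ V := by
  rw [weakStar, nhds_induced, Filter.mem_comap] at hV
  obtain ⟨W, hW, hWV⟩ := hV
  rw [nhds_pi, Filter.mem_pi'] at hW
  obtain ⟨F, t, ht, hFt⟩ := hW
  exact ⟨F, fun ν hν => hWV (hFt fun f hf => by simpa [hν f hf] using mem_of_mem_nhds (ht f))⟩

lemma exists_add_mem_nhds_one_le_abs_Ibil_sub {X : Type*} [MetricSpace X] [CompactSpace X]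
    [MeasurableSpace X] [BorelSpace X] [Infinite X] {μ₁ μ₂ : SignedMeasure X}
    {V₁ V₂ : Set (SignedMeasure X)} (h₁ : V₁ ∈ 𝓝 μ₁) (h₂ : V₂ ∈ 𝓝 μ₂) :
    ∃ σ, μ₁ + σ ∈ V₁ ∧ μ₂ + σ ∈ V₂ ∧ 1 ≤ |Ibil (μ₁ + σ) (μ₂ + σ) - Ibil μ₁ μ₂| := by
  classical
  obtain ⟨F₁, hF₁⟩ := exists_finset_of_mem_nhds_weakStar h₁
  obtain ⟨F₂, hF₂⟩ := exists_finset_of_mem_nhds_weakStar h₂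
  obtain ⟨σ, hσ, hI⟩ := exists_integSM_eq_zero_one_le_abs_Ibil_sub μ₁ μ₂ (F₁ ∪ F₂)
  have hfix : ∀ μ, ∀ f ∈ F₁ ∪ F₂, integSM (μ + σ) f = integSM μ f := fun μ f hf => by
    rw [integSM_add _ _ f.continuous, hσ f hf, add_zero]
  exact ⟨σ, hF₁ _ fun f hf => hfix μ₁ f (Finset.mem_union_left _ hf),
    hF₂ _ fun f hf => hfix μ₂ f (Finset.mem_union_right _ hf), hI⟩

/-- On an infinite compact metric space, `I(·)` is weak-* discontinuous at every
point of `M(X)`, and `I(·,·)` is discontinuous at every point of `M(X) × M(X)`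
(with the product of the weak-* topologies). -/
theorem stmt_10 {X : Type*} [MetricSpace X] [CompactSpace X]
    [MeasurableSpace X] [BorelSpace X] [Infinite X] :
    (∀ μ : SignedMeasure X,
      ¬ @ContinuousAt (SignedMeasure X) ℝ (weakStar X) _ Ien μ) ∧
    (∀ p : SignedMeasure X × SignedMeasure X,
      ¬ @ContinuousAt (SignedMeasure X × SignedMeasure X) ℝ
          (@instTopologicalSpaceProd _ _ (weakStar X) (weakStar X)) _
          (fun q => Ibil q.1 q.2) p) := by
  have hball : ∀ a : ℝ, Metric.ball a 1 ∈ 𝓝 a := fun a => Metric.ball_mem_nhds a one_pos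
  refine ⟨fun μ hcont => ?_, fun ⟨μ₁, μ₂⟩ hcont => ?_⟩
  · have hV : Ien ⁻¹' Metric.ball (Ien μ) 1 ∈ 𝓝 μ := hcont (hball _)
    obtain ⟨σ, hσ, -, hI⟩ := exists_add_mem_nhds_one_le_abs_Ibil_sub hV hV
    rw [Set.mem_preimage, Metric.mem_ball, Real.dist_eq] at hσ
    exact (hI.trans_lt hσ).false
  · obtain ⟨V₁, hV₁, V₂, hV₂, hV⟩ := mem_nhds_prod_iff.1 (hcont (hball _))
    obtain ⟨σ, h₁, h₂, hI⟩ := exists_add_mem_nhds_one_le_abs_Ibil_sub hV₁ hV₂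
    have hσ := hV (Set.mk_mem_prod h₁ h₂)
    rw [Set.mem_preimage, Metric.mem_ball, Real.dist_eq] at hσ
    exact (hI.trans_lt hσ).false
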